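/- Let Σ ∈ ℝ^{p×p} be symmetric positive definite with condition number λ_max(Σ)/λ_min(Σ) ≤ κ. Then for any nonzero vectors w, w* ∈ ℝ^p, 1 − cos(∠(w, w*)) ≤ κ · {1 − cos(∠(Σ^{1/2}w, Σ^{1/2}w*))}. -/

import Mathlib

open Matrix

noncomputable def l2 {n : ℕ} (x : Fin n → ℝ) : ℝ := Real.sqrt (∑ i, x i ^ 2)

noncomputable def cosAngle {n : ℕ} (x y : Fin n → ℝ) : ℝ := (x ⬝ᵥ y) / (l2 x * l2 y)

/-!
For `A = Σ^{1/2}` one has `λ_min ‖x‖² ≤ ‖A x‖² ≤ λ_max ‖x‖²`, and the inequality holds for any linear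
map with such bounds. Applying the lower bound to `z = ‖A w*‖ • w - ‖A w‖ • w*`, whose image has
squared norm `2 ‖A w‖ ‖A w*‖ (‖A w‖ ‖A w*‖ - ⟪A w, A w*⟫)`, and bounding `‖z‖²` below by AM-GM gives
`λ_min (‖w‖ ‖w*‖ - ⟪w, w*⟫) ≤ ‖A w‖ ‖A w*‖ - ⟪A w, A w*⟫`. Dividing by
`‖w‖ ‖w*‖ ≥ ‖A w‖ ‖A w*‖ / λ_max` turns this into the claim with `κ = λ_max / λ_min`.
-/

open InnerProductGeometry RealInnerProductSpace WithLp

section AngleDistortion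

variable {E F : Type*} [NormedAddCommGroup E] [InnerProductSpace ℝ E]
  [NormedAddCommGroup F] [InnerProductSpace ℝ F]

theorem norm_smul_sub_smul_sq (a b : ℝ) (x y : E) :
    ‖a • x - b • y‖ ^ 2 = a ^ 2 * ‖x‖ ^ 2 + b ^ 2 * ‖y‖ ^ 2 - 2 * a * b * ⟪x, y⟫ := by
  rw [norm_sub_sq_real, norm_smul, norm_smul, real_inner_smul_left, real_inner_smul_right,
    mul_pow, mul_pow, Real.norm_eq_abs, Real.norm_eq_abs, sq_abs, sq_abs]
  ring

theorem map_ne_zero_of_lower_bound (f : E →ₗ[ℝ] F) {m : ℝ} (hm : 0 < m)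
    (hf : ∀ x, m * ‖x‖ ^ 2 ≤ ‖f x‖ ^ 2) {x : E} (hx : x ≠ 0) : f x ≠ 0 := by
  intro h
  have := hf x
  rw [h, norm_zero] at this
  have : 0 < m * ‖x‖ ^ 2 := by positivity
  linarith

theorem mul_norm_mul_norm_sub_inner_le (f : E →ₗ[ℝ] F) {m : ℝ} (hm : 0 < m)
    (hf : ∀ x, m * ‖x‖ ^ 2 ≤ ‖f x‖ ^ 2) (x y : E) :
    m * (‖x‖ * ‖y‖ - ⟪x, y⟫) ≤ ‖f x‖ * ‖f y‖ - ⟪f x, f y⟫ := by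
  rcases eq_or_ne x 0 with rfl | hx
  · simp
  rcases eq_or_ne y 0 with rfl | hy
  · simp
  have hx := map_ne_zero_of_lower_bound f hm hf hx
  have hy := map_ne_zero_of_lower_bound f hm hf hy
  set a := ‖f x‖
  set b := ‖f y‖
  have hab : 0 < a * b := mul_pos (norm_pos_iff.mpr hx) (norm_pos_iff.mpr hy)
  have hz := hf (b • x - a • y)
  rw [map_sub, map_smul, map_smul, norm_smul_sub_smul_sq, norm_smul_sub_smul_sq] at hz
  have amgm : 2 * (a * b) * (‖x‖ * ‖y‖) ≤ b ^ 2 * ‖x‖ ^ 2 + a ^ 2 * ‖y‖ ^ 2 := by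
    nlinarith [sq_nonneg (b * ‖x‖ - a * ‖y‖)]
  refine le_of_mul_le_mul_left ?_ (mul_pos two_pos hab)
  calc 2 * (a * b) * (m * (‖x‖ * ‖y‖ - ⟪x, y⟫))
      = m * (2 * (a * b) * (‖x‖ * ‖y‖) - 2 * b * a * ⟪x, y⟫) := by ring
    _ ≤ m * (b ^ 2 * ‖x‖ ^ 2 + a ^ 2 * ‖y‖ ^ 2 - 2 * b * a * ⟪x, y⟫) := by gcongr
    _ ≤ b ^ 2 * a ^ 2 + a ^ 2 * b ^ 2 - 2 * b * a * ⟪f x, f y⟫ := hz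
    _ = 2 * (a * b) * (a * b - ⟪f x, f y⟫) := by ring

theorem norm_mul_norm_le (f : E →ₗ[ℝ] F) {M : ℝ} (hM : 0 ≤ M)
    (hf : ∀ x, ‖f x‖ ^ 2 ≤ M * ‖x‖ ^ 2) (x y : E) :
    ‖f x‖ * ‖f y‖ ≤ M * (‖x‖ * ‖y‖) := by
  refine (sq_le_sq₀ (by positivity) (by positivity)).mp ?_
  calc (‖f x‖ * ‖f y‖) ^ 2 = ‖f x‖ ^ 2 * ‖f y‖ ^ 2 := mul_pow _ _ _
    _ ≤ (M * ‖x‖ ^ 2) * (M * ‖y‖ ^ 2) := by gcongr <;> exact hf _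
    _ = (M * (‖x‖ * ‖y‖)) ^ 2 := by ring

theorem one_sub_cos_angle_le (f : E →ₗ[ℝ] F) {m M : ℝ} (hm : 0 < m)
    (hlow : ∀ x, m * ‖x‖ ^ 2 ≤ ‖f x‖ ^ 2) (hup : ∀ x, ‖f x‖ ^ 2 ≤ M * ‖x‖ ^ 2)
    {x y : E} (hx : x ≠ 0) (hy : y ≠ 0) :
    1 - Real.cos (angle x y) ≤ M / m * (1 - Real.cos (angle (f x) (f y))) := by
  have hxy : 0 < ‖x‖ * ‖y‖ := by positivity
  have hfxy : 0 < ‖f x‖ * ‖f y‖ := by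
    have := map_ne_zero_of_lower_bound f hm hlow hx
    have := map_ne_zero_of_lower_bound f hm hlow hy
    positivity
  have hM : 0 ≤ M :=
    hm.le.trans (le_of_mul_le_mul_right ((hlow x).trans (hup x)) (by positivity))
  have hlow' := mul_norm_mul_norm_sub_inner_le f hm hlow x y
  have hup' := norm_mul_norm_le f hM hup x y
  rw [cos_angle, cos_angle, one_sub_div hxy.ne', one_sub_div hfxy.ne', div_mul_div_comm,
    div_le_div_iff₀ hxy (mul_pos hm hfxy)]
  calc (‖x‖ * ‖y‖ - ⟪x, y⟫) * (m * (‖f x‖ * ‖f y‖))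
      = m * (‖x‖ * ‖y‖ - ⟪x, y⟫) * (‖f x‖ * ‖f y‖) := by ring
    _ ≤ (‖f x‖ * ‖f y‖ - ⟪f x, f y⟫) * (M * (‖x‖ * ‖y‖)) :=
        mul_le_mul hlow' hup' hfxy.le (sub_nonneg.mpr (real_inner_le_norm _ _))
    _ = M * (‖f x‖ * ‖f y‖ - ⟪f x, f y⟫) * (‖x‖ * ‖y‖) := by ring

end AngleDistortion

theorem cosAngle_eq_cos_angle {n : ℕ} (x y : Fin n → ℝ) :
    cosAngle x y = Real.cos (angle (toLp 2 x : EuclideanSpace ℝ (Fin n)) (toLp 2 y)) := by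
  simp [cosAngle, l2, cos_angle, EuclideanSpace.inner_eq_star_dotProduct, EuclideanSpace.norm_eq,
    dotProduct_comm]

namespace Matrix

variable {n : Type*} [Fintype n] [DecidableEq n]

theorem norm_toLp_mulVec_of_mem_unitaryGroup {𝕜 : Type*} [RCLike 𝕜] {U : Matrix n n 𝕜}
    (hU : U ∈ unitaryGroup n 𝕜) (x : n → 𝕜) :
    ‖(toLp 2 (U *ᵥ x) : EuclideanSpace 𝕜 n)‖ = ‖(toLp 2 x : EuclideanSpace 𝕜 n)‖ := by
  have norm_sq (v : n → 𝕜) : ((‖(toLp 2 v : EuclideanSpace 𝕜 n)‖ : 𝕜)) ^ 2 = star v ⬝ᵥ v := by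
    rw [← inner_self_eq_norm_sq_to_K, EuclideanSpace.inner_eq_star_dotProduct, dotProduct_comm]
  have h : star (U *ᵥ x) ⬝ᵥ (U *ᵥ x) = star x ⬝ᵥ x := by
    rw [star_mulVec, ← dotProduct_mulVec, mulVec_mulVec, ← star_eq_conjTranspose,
      mem_unitaryGroup_iff'.mp hU, one_mulVec]
  rw [← norm_sq, ← norm_sq] at h
  exact (pow_left_inj₀ (norm_nonneg _) (norm_nonneg _) two_ne_zero).mp (by exact_mod_cast h)

theorem norm_sq_toLp_diagonal_mulVec (d y : n → ℝ) :
    ‖(toLp 2 (diagonal d *ᵥ y) : EuclideanSpace ℝ n)‖ ^ 2 = ∑ i, d i ^ 2 * y i ^ 2 := by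
  simp [EuclideanSpace.norm_sq_eq, mulVec_diagonal, mul_pow]

noncomputable def PosSemidef.sqrt {S : Matrix n n ℝ} (hS : S.PosSemidef) : Matrix n n ℝ :=
  (hS.1.eigenvectorUnitary : Matrix n n ℝ) * diagonal ((↑) ∘ (√·) ∘ hS.1.eigenvalues) *
    (star hS.1.eigenvectorUnitary : Matrix n n ℝ)

theorem PosSemidef.norm_sq_toLp_sqrt_mulVec {S : Matrix n n ℝ} (hS : S.PosSemidef) (x : n → ℝ) :
    ‖(toLp 2 (hS.sqrt *ᵥ x) : EuclideanSpace ℝ n)‖ ^ 2 =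
      ∑ i, hS.1.eigenvalues i * (star (hS.1.eigenvectorUnitary : Matrix n n ℝ) *ᵥ x) i ^ 2 := by
  rw [PosSemidef.sqrt, ← mulVec_mulVec, ← mulVec_mulVec,
    norm_toLp_mulVec_of_mem_unitaryGroup hS.1.eigenvectorUnitary.2, norm_sq_toLp_diagonal_mulVec]
  simp [Real.sq_sqrt (hS.eigenvalues_nonneg _)]

theorem norm_sq_eq_sum_star_mulVec {U : Matrix n n ℝ} (hU : U ∈ unitaryGroup n ℝ)
    (v : EuclideanSpace ℝ n) : ‖v‖ ^ 2 = ∑ i, (star U *ᵥ ofLp v) i ^ 2 := by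
  rw [← toLp_ofLp 2 v, ← norm_toLp_mulVec_of_mem_unitaryGroup (Unitary.star_mem hU),
    EuclideanSpace.norm_sq_eq]
  simp

theorem PosSemidef.mul_norm_sq_le_norm_sq_toLpLin_sqrt {S : Matrix n n ℝ} (hS : S.PosSemidef)
    {m : ℝ} (hm : ∀ i, m ≤ hS.1.eigenvalues i) (v : EuclideanSpace ℝ n) :
    m * ‖v‖ ^ 2 ≤ ‖toLpLin 2 2 hS.sqrt v‖ ^ 2 := by
  rw [toLpLin_apply, hS.norm_sq_toLp_sqrt_mulVec,
    norm_sq_eq_sum_star_mulVec hS.1.eigenvectorUnitary.2, Finset.mul_sum]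
  gcongr with i
  exact hm i

theorem PosSemidef.norm_sq_toLpLin_sqrt_le_mul {S : Matrix n n ℝ} (hS : S.PosSemidef)
    {M : ℝ} (hM : ∀ i, hS.1.eigenvalues i ≤ M) (v : EuclideanSpace ℝ n) :
    ‖toLpLin 2 2 hS.sqrt v‖ ^ 2 ≤ M * ‖v‖ ^ 2 := by
  rw [toLpLin_apply, hS.norm_sq_toLp_sqrt_mulVec,
    norm_sq_eq_sum_star_mulVec hS.1.eigenvectorUnitary.2, Finset.mul_sum]
  gcongr with i
  exact hM i

end Matrix

theorem stmt_5 (p : ℕ) (hp : 0 < p) (S : Matrix (Fin p) (Fin p) ℝ) (hS : S.PosDef)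
    (κ : ℝ)
    (hκ : Finset.univ.sup' (Finset.univ_nonempty_iff.mpr ⟨⟨0, hp⟩⟩) hS.1.eigenvalues /
          Finset.univ.inf' (Finset.univ_nonempty_iff.mpr ⟨⟨0, hp⟩⟩) hS.1.eigenvalues ≤ κ)
    (w wstar : Fin p → ℝ) (hw : w ≠ 0) (hwstar : wstar ≠ 0) :
    1 - cosAngle w wstar ≤
      κ * (1 - cosAngle (((hS.posSemidef.1.eigenvectorUnitary : Matrix (Fin p) (Fin p) ℝ) * diagonal ((↑) ∘ (√·) ∘ hS.posSemidef.1.eigenvalues) * (star hS.posSemidef.1.eigenvectorUnitary : Matrix (Fin p) (Fin p) ℝ)) *ᵥ w) (((hS.posSemidef.1.eigenvectorUnitary : Matrix (Fin p) (Fin p) ℝ) * diagonal ((↑) ∘ (√·) ∘ hS.posSemidef.1.eigenvalues) * (star hS.posSemidef.1.eigenvectorUnitary : Matrix (Fin p) (Fin p) ℝ)) *ᵥ wstar)) := by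
  set m := Finset.univ.inf' (Finset.univ_nonempty_iff.mpr ⟨⟨0, hp⟩⟩) hS.1.eigenvalues
  set M := Finset.univ.sup' (Finset.univ_nonempty_iff.mpr ⟨⟨0, hp⟩⟩) hS.1.eigenvalues
  have hm : 0 < m := (Finset.lt_inf'_iff _).mpr fun i _ ↦ hS.eigenvalues_pos i
  have hlow := hS.posSemidef.mul_norm_sq_le_norm_sq_toLpLin_sqrt (m := m)
    fun i ↦ Finset.inf'_le _ (Finset.mem_univ i)
  have hup := hS.posSemidef.norm_sq_toLpLin_sqrt_le_mul (M := M)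
    fun i ↦ Finset.le_sup' _ (Finset.mem_univ i)
  have key := one_sub_cos_angle_le _ hm hlow hup (x := toLp 2 w) (y := toLp 2 wstar)
    (by simpa using hw) (by simpa using hwstar)
  rw [cosAngle_eq_cos_angle, cosAngle_eq_cos_angle]
  calc _ ≤ _ := key
    _ ≤ _ := mul_le_mul_of_nonneg_right hκ (sub_nonneg.mpr (Real.cos_le_one _))
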